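/- arXiv:2106.13759 — 5 statements merged into one kernel-verified Lean document; each statement's English description precedes it below -/
import Mathlib

section
/- Let a be a root of unity in ℂ. Then |a + a + a⁻²|² = 5 + 2(a³ + a⁻³), and this quantity is an integer if and only if a¹² = 1 or a¹⁸ = 1 (equivalently, the multiplicative order of a³ divides 4 or divides 6; equivalently, the multiplicative order of a lies in {1, 2, 3, 4, 6, 9, 12, 18}). -/
/-!
For `‖a‖ = 1` we have `conj a = a⁻¹`, so `‖2a + a⁻²‖² = (2a + a⁻²)(2a⁻¹ + a²) = 5 + 2w` with
`w = a³ + a⁻³`. Since `a³` is a root of unity, `w` is an algebraic integer; if `5 + 2w` is an integer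
then `w` is rational, hence an integer, and `|w| ≤ 2`. Finally, writing `z = a³`,
`(z⁴ - 1)(z⁶ - 1) = ∏_{k=-2}^{2} (z² - kz + 1)`, so `z + z⁻¹` is an integer of absolute value at
most `2` exactly when `z⁴ = 1` or `z⁶ = 1`.
-/

open Polynomial

theorem isIntegral_add_inv_of_pow_eq_one {K : Type*} [Field K] {z : K} {n : ℕ} (hn : n ≠ 0)
    (hz : z ^ n = 1) : IsIntegral ℤ (z + z⁻¹) := by
  have hz_int : IsIntegral ℤ z := ⟨X ^ n - 1, monic_X_pow_sub_C 1 hn, by simp [hz]⟩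
  have hz_inv : z⁻¹ = z ^ (n - 1) := by
    rw [inv_eq_of_mul_eq_one_right]
    rw [← pow_succ', Nat.sub_add_cancel (Nat.one_le_iff_ne_zero.mpr hn), hz]
  rw [hz_inv]
  exact hz_int.add (hz_int.pow _)

theorem exists_intCast_eq_of_isIntegral {K : Type*} [Field K] [CharZero K] {w : K}
    (hw : IsIntegral ℤ w) {q : ℚ} (hq : w = q) : ∃ k : ℤ, w = k := by
  rw [hq, ← eq_ratCast (algebraMap ℚ K), isIntegral_algebraMap_iff (algebraMap ℚ K).injective,
    IsIntegrallyClosed.isIntegral_iff] at hw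
  obtain ⟨k, hk⟩ := hw
  exact ⟨k, by rw [hq, ← hk]; simp⟩

theorem pow_four_eq_one_or_pow_six_eq_one_iff {K : Type*} [Field K] {z : K} (hz : z ≠ 0) :
    z ^ 4 = 1 ∨ z ^ 6 = 1 ↔ ∃ k : ℤ, |k| ≤ 2 ∧ z + z⁻¹ = k := by
  have hroots :
      (z ^ 4 - 1) * (z ^ 6 - 1) = ∏ k ∈ Finset.Icc (-2 : ℤ) 2, (z ^ 2 - k * z + 1) := by
    rw [show Finset.Icc (-2 : ℤ) 2 = {-2, -1, 0, 1, 2} by decide, Finset.prod_insert (by decide),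
      Finset.prod_insert (by decide), Finset.prod_insert (by decide), Finset.prod_pair (by decide)]
    push_cast
    ring
  have hquad (k : ℤ) : z + z⁻¹ = k ↔ z ^ 2 - k * z + 1 = 0 := by
    rw [← sub_eq_zero]
    constructor <;> intro h
    · field_simp at h; linear_combination h
    · field_simp; linear_combination h
  simp only [hquad, abs_le, ← Finset.mem_Icc, ← Finset.prod_eq_zero_iff, ← hroots, mul_eq_zero,
    sub_eq_zero]

theorem Complex.exists_intCast_eq_add_inv_iff {z : ℂ} (hz : ‖z‖ = 1) :
    (∃ k : ℤ, z + z⁻¹ = k) ↔ z ^ 4 = 1 ∨ z ^ 6 = 1 := by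
  have hz0 : z ≠ 0 := norm_ne_zero_iff.mp (by simp [hz])
  rw [pow_four_eq_one_or_pow_six_eq_one_iff hz0]
  refine ⟨fun ⟨k, hk⟩ ↦ ⟨k, ?_, hk⟩, fun ⟨k, _, hk⟩ ↦ ⟨k, hk⟩⟩
  have : |(k : ℝ)| ≤ 2 := calc
    |(k : ℝ)| = ‖z + z⁻¹‖ := by rw [hk, Complex.norm_intCast]
    _ ≤ ‖z‖ + ‖z⁻¹‖ := norm_add_le _ _
    _ = 2 := by rw [norm_inv, hz]; norm_num
  exact_mod_cast this

theorem Complex.ofReal_sq_norm_two_mul_add_inv_sq {a : ℂ} (ha : ‖a‖ = 1) :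
    ((‖a + a + a⁻¹ ^ 2‖ ^ 2 : ℝ) : ℂ) = 5 + 2 * (a ^ 3 + a⁻¹ ^ 3) := by
  have ha0 : a ≠ 0 := norm_ne_zero_iff.mp (by simp [ha])
  rw [Complex.ofReal_pow, ← Complex.mul_conj', map_add, map_add, map_pow, map_inv₀,
    ← Complex.inv_eq_conj ha, inv_inv]
  field_simp
  ring

theorem Complex.exists_intCast_eq_sq_norm_two_mul_add_inv_sq_iff {a : ℂ} {n : ℕ} (hn : n ≠ 0)
    (ha : a ^ n = 1) :
    (∃ m : ℤ, ‖a + a + a⁻¹ ^ 2‖ ^ 2 = (m : ℝ)) ↔ ∃ k : ℤ, a ^ 3 + (a ^ 3)⁻¹ = k := by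
  have hnorm := Complex.ofReal_sq_norm_two_mul_add_inv_sq (Complex.norm_eq_one_of_pow_eq_one ha hn)
  rw [inv_pow a 3] at hnorm
  constructor
  · rintro ⟨m, hm⟩
    have hw : a ^ 3 + (a ^ 3)⁻¹ = (((m - 5) / 2 : ℚ) : ℂ) := by
      rw [hm] at hnorm
      push_cast at hnorm ⊢
      linear_combination -hnorm / 2
    have ha3 : (a ^ 3) ^ n = 1 := by rw [← pow_mul, mul_comm, pow_mul, ha, one_pow]
    exact exists_intCast_eq_of_isIntegral (isIntegral_add_inv_of_pow_eq_one hn ha3) hw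
  · rintro ⟨k, hk⟩
    refine ⟨5 + 2 * k, Complex.ofReal_injective ?_⟩
    rw [hnorm, hk]
    push_cast
    ring

theorem Nat.dvd_twelve_or_dvd_eighteen_iff (d : ℕ) :
    d ∣ 12 ∨ d ∣ 18 ↔ d ∈ ({1, 2, 3, 4, 6, 9, 12, 18} : Set ℕ) := by
  have hdvd (n : ℕ) (hn : n ≠ 0) : d ∣ n ↔ d ∈ n.divisors := by rw [Nat.mem_divisors, and_iff_left hn]
  rw [hdvd 12 (by norm_num), hdvd 18 (by norm_num), show Nat.divisors 12 = {1, 2, 3, 4, 6, 12} by decide,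
    show Nat.divisors 18 = {1, 2, 3, 6, 9, 18} by decide]
  simp only [Finset.mem_insert, Finset.mem_singleton, Set.mem_insert_iff, Set.mem_singleton_iff]
  omega

theorem statement2 (a : ℂ) (ha : ∃ n : ℕ, 0 < n ∧ a ^ n = 1) :
    (((‖a + a + a⁻¹ ^ 2‖) ^ 2 : ℝ) : ℂ) = 5 + 2 * (a ^ 3 + a⁻¹ ^ 3) ∧
    ((∃ m : ℤ, (‖a + a + a⁻¹ ^ 2‖) ^ 2 = (m : ℝ)) ↔
      (a ^ 12 = 1 ∨ a ^ 18 = 1)) ∧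
    ((a ^ 12 = 1 ∨ a ^ 18 = 1) ↔ (orderOf (a ^ 3) ∣ 4 ∨ orderOf (a ^ 3) ∣ 6)) ∧
    ((a ^ 12 = 1 ∨ a ^ 18 = 1) ↔
      orderOf a ∈ ({1, 2, 3, 4, 6, 9, 12, 18} : Set ℕ)) := by
  obtain ⟨n, hn, han⟩ := ha
  have hnorm : ‖a‖ = 1 := Complex.norm_eq_one_of_pow_eq_one han hn.ne'
  have hpow : (a ^ 12 = 1 ∨ a ^ 18 = 1) ↔ (a ^ 3) ^ 4 = 1 ∨ (a ^ 3) ^ 6 = 1 := by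
    simp only [← pow_mul]
  refine ⟨Complex.ofReal_sq_norm_two_mul_add_inv_sq hnorm, ?_, ?_, ?_⟩
  · rw [Complex.exists_intCast_eq_sq_norm_two_mul_add_inv_sq_iff hn.ne' han, hpow,
      Complex.exists_intCast_eq_add_inv_iff (by rw [norm_pow, hnorm, one_pow])]
  · simp only [hpow, orderOf_dvd_iff_pow_eq_one]
  · rw [← Nat.dvd_twelve_or_dvd_eighteen_iff, orderOf_dvd_iff_pow_eq_one, orderOf_dvd_iff_pow_eq_one]
end

section
/- For every positive integer n, the following are equivalent: (i) for all complex numbers z₁, z₂, z₃ with z₁ⁿ = z₂ⁿ = z₃ⁿ = 1 and z₁z₂z₃ = 1, the quantity |z₁ + z₂ + z₃|² is an integer; (ii) n ∈ {1, 2, 3, 4, 6}. (Equivalently: the subgroup of SU(3) consisting of all diagonal matrices whose order divides n satisfies the restricted rationality condition if and only if n ∈ {1, 2, 3, 4, 6}.) -/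
/-!
If `n ∣ 4` or `n ∣ 6`, then `w + w⁻¹ ∈ {0, ±1, ±2}` for every `n`-th root of unity `w`, and for
unit complex numbers `|z₁ + z₂ + z₃|² = 3 + ∑_{i < j} (zᵢ/zⱼ + zⱼ/zᵢ)` is an integer.
Conversely, for an `n`-th root of unity `ζ` with `x = 2 Re ζ`, the triples `(ζ, ζ⁻¹, 1)` and
`(ζ², ζ⁻², 1)` give `(x + 1)² ∈ ℤ` and `(x² - 1)² ∈ ℤ`, which forces `x ∈ ℚ`. Taking
`ζ = exp(2πi/n)`, Niven's theorem on rational values of `cos` at rational multiples of `π`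
leaves only `n ∈ {1, 2, 3, 4, 6}`.
-/

open Complex

theorem exists_int_add_inv_eq_of_pow_eq_one {K : Type*} [Field K] {n : ℕ} (hn : n ∣ 4 ∨ n ∣ 6)
    {w : K} (hw : w ^ n = 1) : ∃ k : ℤ, w + w⁻¹ = k := by
  have hpow {m : ℕ} (h : n ∣ m) : w ^ m = 1 := by
    obtain ⟨k, rfl⟩ := h
    rw [pow_mul, hw, one_pow]
  have h46 : w ^ 4 = 1 ∨ w ^ 6 = 1 := hn.imp hpow hpow
  have hw0 : w ≠ 0 := by rintro rfl; simp at h46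
  set t := w + w⁻¹ with ht
  -- `w ^ 5 * ∏ (t - k)` over `k ∈ {2, -2, 0, 1, -1}` factors as `(w ^ 4 - 1) * (w ^ 6 - 1)`.
  have hprod : (t - 2) * (t + 2) * t * (t - 1) * (t + 1) = 0 := by
    have : w ^ 5 * ((t - 2) * (t + 2) * t * (t - 1) * (t + 1)) = (w ^ 4 - 1) * (w ^ 6 - 1) := by
      rw [ht]; field_simp; ring
    rcases h46 with h | h <;> simpa [h, hw0] using this
  simp only [mul_eq_zero, sub_eq_zero, add_eq_zero_iff_eq_neg] at hprod
  rcases hprod with (((h | h) | h) | h) | h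
  · exact ⟨2, by rw [h]; norm_num⟩
  · exact ⟨-2, by rw [h]; norm_num⟩
  · exact ⟨0, by rw [h]; norm_num⟩
  · exact ⟨1, by rw [h]; norm_num⟩
  · exact ⟨-1, by rw [h]; norm_num⟩

theorem sq_norm_add_add_of_norm_eq_one {z₁ z₂ z₃ : ℂ} (h₁ : ‖z₁‖ = 1) (h₂ : ‖z₂‖ = 1)
    (h₃ : ‖z₃‖ = 1) :
    (‖z₁ + z₂ + z₃‖ ^ 2 : ℂ) = 3 + (z₁ / z₂ + (z₁ / z₂)⁻¹) + (z₁ / z₃ + (z₁ / z₃)⁻¹)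
      + (z₂ / z₃ + (z₂ / z₃)⁻¹) := by
  have hz {z : ℂ} (h : ‖z‖ = 1) : z ≠ 0 := norm_ne_zero_iff.mp (h ▸ one_ne_zero)
  rw [← mul_conj', map_add, map_add, ← inv_eq_conj h₁, ← inv_eq_conj h₂, ← inv_eq_conj h₃]
  field_simp [hz h₁, hz h₂, hz h₃]
  ring

theorem sq_norm_add_inv_add_one {ζ : ℂ} (h : ‖ζ‖ = 1) :
    ‖ζ + ζ⁻¹ + 1‖ ^ 2 = (2 * ζ.re + 1) ^ 2 := by
  rw [inv_eq_conj h, add_conj, ← ofReal_one, ← ofReal_add, norm_real, Real.norm_eq_abs, sq_abs]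

theorem re_sq_of_norm_eq_one {ζ : ℂ} (h : ‖ζ‖ = 1) : (ζ ^ 2).re = 2 * ζ.re ^ 2 - 1 := by
  have hn : ζ.re ^ 2 + ζ.im ^ 2 = 1 := by
    rw [sq, sq, ← normSq_apply, ← Complex.sq_norm, h, one_pow]
  rw [sq, mul_re]
  linear_combination -hn

theorem exists_rat_eq_of_sq_add_one_of_sq_sq_sub_one {x : ℝ} {m₁ m₂ : ℤ} (h₁ : (x + 1) ^ 2 = m₁)
    (h₂ : (x ^ 2 - 1) ^ 2 = m₂) : ∃ q : ℚ, x = q := by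
  by_cases hm : (m₁ : ℝ) = 0
  · exact ⟨-1, by push_cast; nlinarith [sq_nonneg (x + 1)]⟩
  · -- `(x ^ 2 - 1) ^ 2 = (x + 1) ^ 2 * ((x + 1) ^ 2 - 4 * x)` is linear in `x` given `m₁`.
    refine ⟨(m₁ ^ 2 - m₂) / (4 * m₁), ?_⟩
    push_cast
    field_simp
    linear_combination ((m₁ : ℝ) - 4 * x + (x + 1) ^ 2) * h₁ - h₂

/-- `diag(z₁, z₂, z₃)` runs over the elements of `SU(3)` of order dividing `n`, and
`z₁ + z₂ + z₃` is its trace. -/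
def DiagRestrictedRational (n : ℕ) : Prop :=
  ∀ z₁ z₂ z₃ : ℂ, z₁ ^ n = 1 → z₂ ^ n = 1 → z₃ ^ n = 1 → z₁ * z₂ * z₃ = 1 →
    ∃ m : ℤ, ‖z₁ + z₂ + z₃‖ ^ 2 = (m : ℝ)

theorem diagRestrictedRational_of_dvd {n : ℕ} (hn : n ∣ 4 ∨ n ∣ 6) :
    DiagRestrictedRational n := by
  intro z₁ z₂ z₃ h₁ h₂ h₃ _
  have hn0 : n ≠ 0 := by rintro rfl; simp at hn
  have hdiv {z w : ℂ} (hz : z ^ n = 1) (hw : w ^ n = 1) : (z / w) ^ n = 1 := by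
    rw [div_pow, hz, hw, div_one]
  obtain ⟨a, ha⟩ := exists_int_add_inv_eq_of_pow_eq_one hn (hdiv h₁ h₂)
  obtain ⟨b, hb⟩ := exists_int_add_inv_eq_of_pow_eq_one hn (hdiv h₁ h₃)
  obtain ⟨c, hc⟩ := exists_int_add_inv_eq_of_pow_eq_one hn (hdiv h₂ h₃)
  refine ⟨3 + a + b + c, ofReal_injective ?_⟩
  push_cast
  rw [sq_norm_add_add_of_norm_eq_one (norm_eq_one_of_pow_eq_one h₁ hn0)
    (norm_eq_one_of_pow_eq_one h₂ hn0) (norm_eq_one_of_pow_eq_one h₃ hn0), ha, hb, hc]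

theorem DiagRestrictedRational.exists_int_sq_two_mul_re_add_one {n : ℕ}
    (H : DiagRestrictedRational n) (hn : n ≠ 0) {ζ : ℂ} (hζ : ζ ^ n = 1) :
    ∃ m : ℤ, (2 * ζ.re + 1) ^ 2 = m := by
  have hζ0 : ζ ≠ 0 := by rintro rfl; simp [hn] at hζ
  obtain ⟨m, hm⟩ := H ζ ζ⁻¹ 1 hζ (by rw [inv_pow, hζ, inv_one]) (one_pow n)
    (by rw [mul_inv_cancel₀ hζ0, one_mul])
  exact ⟨m, (sq_norm_add_inv_add_one (norm_eq_one_of_pow_eq_one hζ hn)).symm.trans hm⟩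

theorem DiagRestrictedRational.exists_rat_re_eq {n : ℕ} (H : DiagRestrictedRational n)
    (hn : n ≠ 0) {ζ : ℂ} (hζ : ζ ^ n = 1) : ∃ q : ℚ, ζ.re = q := by
  have hζ2 : (ζ ^ 2) ^ n = 1 := by rw [← pow_mul, mul_comm, pow_mul, hζ, one_pow]
  obtain ⟨m₁, hm₁⟩ := H.exists_int_sq_two_mul_re_add_one hn hζ
  obtain ⟨m₂, hm₂⟩ := H.exists_int_sq_two_mul_re_add_one hn hζ2
  rw [re_sq_of_norm_eq_one (norm_eq_one_of_pow_eq_one hζ hn)] at hm₂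
  obtain ⟨q, hq⟩ := exists_rat_eq_of_sq_add_one_of_sq_sq_sub_one hm₁
    (m₂ := m₂) (by linear_combination hm₂)
  exact ⟨q / 2, by push_cast; linarith⟩

theorem DiagRestrictedRational.mem_one_two_three_four_six {n : ℕ} (H : DiagRestrictedRational n)
    (hn : 0 < n) :
    n ∈ ({1, 2, 3, 4, 6} : Set ℕ) := by
  obtain rfl | hn2 : n = 1 ∨ 2 ≤ n := by omega
  · simp
  have hn0 : n ≠ 0 := by omega
  have hcos : ∃ q : ℚ, Real.cos ((2 / n : ℚ) * Real.pi) = q := by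
    obtain ⟨q, hq⟩ := H.exists_rat_re_eq hn0 (Complex.isPrimitiveRoot_exp n hn0).pow_eq_one
    refine ⟨q, Eq.trans ?_ hq⟩
    rw [← exp_ofReal_mul_I_re]
    congr 2
    push_cast
    ring
  have hr : (2 / n : ℚ) ∈ Set.Icc 0 1 := ⟨by positivity, by
    rw [div_le_one (by positivity)]; exact_mod_cast hn2⟩
  have h := niven_angle_div_pi_eq hcos hr
  simp only [Set.mem_insert_iff, Set.mem_singleton_iff] at h ⊢
  rcases h with h | h | h | h | h <;> field_simp at h <;> norm_cast at h <;> omega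

theorem statement4 (n : ℕ) (hn : 0 < n) :
    (∀ z₁ z₂ z₃ : ℂ, z₁ ^ n = 1 → z₂ ^ n = 1 → z₃ ^ n = 1 → z₁ * z₂ * z₃ = 1 →
      ∃ m : ℤ, ‖z₁ + z₂ + z₃‖ ^ 2 = (m : ℝ)) ↔
    n ∈ ({1, 2, 3, 4, 6} : Set ℕ) := by
  refine ⟨fun H ↦ DiagRestrictedRational.mem_one_two_three_four_six H hn, fun h ↦ ?_⟩
  apply diagRestrictedRational_of_dvd
  rcases h with rfl | rfl | rfl | rfl | rfl <;> norm_num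
end

section
/- Let H̃ be a finite subgroup of U(1) × SU(2) containing (−1, −1) and (e(1/3), 1) whose projection to SU(2) equals the binary tetrahedral group 2T, and suppose the subgroup H = π(H̃) of SU(3) satisfies the restricted rationality condition. Then H is conjugate in SU(3) to one of the following four subgroups: π(μ₆ × 2T), π(μ₁₂ × 2T), π(μ₁₈ × 2T), or π({(u, g) ∈ μ₁₈ × 2T : u⁶ = χ(g)}), where χ : 2T → μ₃ is a surjective homomorphism (its kernel is then Q = {±1, ±i, ±j, ±k}, and the two possible choices of χ yield subgroups that are conjugate in SU(3)). -/
noncomputable section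

open Matrix

abbrev UG3 := Matrix.unitaryGroup (Fin 3) ℂ

/-- The special unitary group SU(3), as a subgroup of the 3×3 unitary group:
matrices that are unitary and have determinant 1. -/
def SU3 : Subgroup ↥UG3 := MonoidHom.ker (Matrix.detMonoidHom.comp UG3.subtype)

abbrev G3 := ↥SU3

/-- The underlying 3×3 complex matrix of an element of SU(3). -/
def m3 (x : G3) : Matrix (Fin 3) (Fin 3) ℂ := ((x : ↥UG3) : Matrix (Fin 3) (Fin 3) ℂ)

/-- `e(x) = exp(2πi·x)`. -/
def eQ (x : ℚ) : ℂ := Complex.exp (2 * Real.pi * Complex.I * (x : ℂ))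

/-- `D(u,v,w) = diag(e(u), e(v), e(w))`. -/
def Dm (u v w : ℚ) : Matrix (Fin 3) (Fin 3) ℂ := Matrix.diagonal ![eQ u, eQ v, eQ w]

/-- The subgroup of SU(3) generated by the elements whose matrices lie in `s`. -/
def sgOf (s : Set (Matrix (Fin 3) (Fin 3) ℂ)) : Subgroup G3 :=
  Subgroup.closure {x : G3 | m3 x ∈ s}

/-- μ₃ : the subgroup of SU(3) of scalar matrices ζ·1 with ζ³ = 1. -/
def mu3 : Subgroup G3 :=
  sgOf {M | ∃ ζ : ℂ, ζ ^ 3 = 1 ∧ M = ζ • (1 : Matrix (Fin 3) (Fin 3) ℂ)}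

/-- The restricted rationality condition: |Trace A|² ∈ ℤ for all A ∈ H. -/
def RRC (H : Subgroup G3) : Prop :=
  ∀ x ∈ H, ∃ k : ℤ, (‖Matrix.trace (m3 x)‖) ^ 2 = (k : ℝ)

/-- Two subgroups of SU(3) are conjugate if one is carried onto the other by
conjugation by an element of SU(3). -/
def IsConjSub (H K : Subgroup G3) : Prop :=
  ∃ g : G3, Subgroup.map (MulAut.conj g).toMonoidHom H = K

-- matrices S, T₁, T₂, T₄, P₂₃
def Sm : Matrix (Fin 3) (Fin 3) ℂ := !![0, 0, 1; 1, 0, 0; 0, 1, 0]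

def Rm (ξ α : ℂ) : Matrix (Fin 3) (Fin 3) ℂ :=
  !![-(starRingEnd ℂ ξ), 0, 0; 0, 0, -(starRingEnd ℂ α); 0, -(ξ * α), 0]

def T1m : Matrix (Fin 3) (Fin 3) ℂ := Rm 1 1
def T2m : Matrix (Fin 3) (Fin 3) ℂ := Rm (-1) Complex.I
def T4m : Matrix (Fin 3) (Fin 3) ℂ := Rm Complex.I (eQ (3/8))

def P23 : Matrix (Fin 3) (Fin 3) ℂ := !![1, 0, 0; 0, 0, 1; 0, 1, 0]


abbrev UG2 := Matrix.unitaryGroup (Fin 2) ℂ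

/-- The special unitary group SU(2). -/
def SU2 : Subgroup ↥UG2 := MonoidHom.ker (Matrix.detMonoidHom.comp UG2.subtype)

abbrev G2 := ↥SU2

def m2 (x : G2) : Matrix (Fin 2) (Fin 2) ℂ := ((x : ↥UG2) : Matrix (Fin 2) (Fin 2) ℂ)

/-- The 2×2 matrix corresponding to the quaternion a + bi + cj + dk. -/
def qmat (a b c d : ℝ) : Matrix (Fin 2) (Fin 2) ℂ :=
  !![(a : ℂ) + b * Complex.I, (c : ℂ) + d * Complex.I;
     -(c : ℂ) + d * Complex.I, (a : ℂ) - b * Complex.I]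

/-- The binary tetrahedral group 2T = {±1, ±i, ±j, ±k, (±1 ± i ± j ± k)/2},
as a set of 2×2 matrices. -/
def twoT : Set (Matrix (Fin 2) (Fin 2) ℂ) :=
  {qmat 1 0 0 0, qmat (-1) 0 0 0, qmat 0 1 0 0, qmat 0 (-1) 0 0,
   qmat 0 0 1 0, qmat 0 0 (-1) 0, qmat 0 0 0 1, qmat 0 0 0 (-1)} ∪
  {M | ∃ a b c d : ℝ, (a = 1/2 ∨ a = -(1/2)) ∧ (b = 1/2 ∨ b = -(1/2)) ∧
    (c = 1/2 ∨ c = -(1/2)) ∧ (d = 1/2 ∨ d = -(1/2)) ∧ M = qmat a b c d}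

/-- The binary octahedral group 2O = 2T ∪ 2T·((1+i)/√2), as a set of 2×2 matrices. -/
def twoO : Set (Matrix (Fin 2) (Fin 2) ℂ) :=
  twoT ∪ (fun M => M * qmat (Real.sqrt 2)⁻¹ (Real.sqrt 2)⁻¹ 0 0) '' twoT

/-- The 3×3 matrix π(u, A) : block-diagonal with (1,1) entry u² and lower-right
2×2 block u⁻¹·A. -/
def su3block (u : ℂ) (A : Matrix (Fin 2) (Fin 2) ℂ) : Matrix (Fin 3) (Fin 3) ℂ :=
  !![u ^ 2, 0, 0;
     0, u⁻¹ * A 0 0, u⁻¹ * A 0 1;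
     0, u⁻¹ * A 1 0, u⁻¹ * A 1 1]

/-- The map π on U(1) × SU(2), at the matrix level. -/
def piMat (p : ↥(unitary ℂ) × G2) : Matrix (Fin 3) (Fin 3) ℂ :=
  su3block (p.1 : ℂ) (m2 p.2)

/-- π(μ_m × 2T), as a set of 3×3 matrices. -/
def BT (m : ℕ) : Set (Matrix (Fin 3) (Fin 3) ℂ) :=
  {M | ∃ u : ℂ, u ^ m = 1 ∧ ∃ A ∈ twoT, M = su3block u A}

/-- π({(u, g) ∈ μ₁₈ × 2T : u⁶ = χ(g)}), as a set of 3×3 matrices. -/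
def BT11 (χ : Matrix (Fin 2) (Fin 2) ℂ → ℂ) : Set (Matrix (Fin 3) (Fin 3) ℂ) :=
  {M | ∃ u : ℂ, u ^ 18 = 1 ∧ ∃ A ∈ twoT, u ^ 6 = χ A ∧ M = su3block u A}


/-
Let K = {u : (u, 1) ∈ H̃}, a finite cyclic subgroup of U(1), say of order m. The commutator
subgroup of 2T is Q and 2T/Q has exponent 3, so every element of H̃ over Q has its U(1)-component
in K, and u³ ∈ K for every (u, g) ∈ H̃; in particular −1, e(1/3) ∈ K and 6 ∣ m.

With tr(π(u, g)) = u² + u⁻¹ tr g one finds |tr π(u, g)|² = 1 + t² + 2t Re(u³) for t = tr g real.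
For u ∈ K (t = 2) the rationality condition gives 4 Re(u³) ∈ ℤ; applied to a generator σ and
to σ² it forces 2 Re(σ³) ∈ ℤ, so σ³ has order dividing 4 or 6 and m ∈ {6, 12, 18}.
If all of H̃ lies in K × 2T, then H = π(μ_m × 2T). Otherwise pick (u₀, g₀) ∈ H̃ with u₀ ∉ K;
then g₀ ∉ Q, tr g₀ = ±1, and 2 Re((v u₀)³) ∈ ℤ for all v ∈ K, which is impossible for
m = 12 and m = 18. For m = 6, g ↦ u⁶ for any lift (u, g) ∈ H̃ is a well-defined surjective
character χ : 2T → μ₃, and H = π({(u, g) ∈ μ₁₈ × 2T : u⁶ = χ(g)}).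
-/

lemma qmat_mul (a b c d e f g h : ℝ) : qmat a b c d * qmat e f g h =
    qmat (a*e - b*f - c*g - d*h) (a*f + b*e + c*h - d*g)
         (a*g - b*h + c*e + d*f) (a*h + b*g - c*f + d*e) := by
  ext i j
  fin_cases i <;> fin_cases j <;>
    simp [qmat, Matrix.mul_apply, Fin.sum_univ_two, Complex.ext_iff] <;>
    constructor <;> ring

lemma star_qmat (a b c d : ℝ) : star (qmat a b c d) = qmat a (-b) (-c) (-d) := by
  ext i j
  fin_cases i <;> fin_cases j <;>
    simp [qmat, Matrix.star_apply]

lemma qmat_one : qmat 1 0 0 0 = 1 := by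
  ext i j; fin_cases i <;> fin_cases j <;> simp [qmat]

lemma qmat_neg_one : qmat (-1) 0 0 0 = -1 := by
  ext i j; fin_cases i <;> fin_cases j <;> simp [qmat]

lemma qmat_diag_sum (a b c d : ℝ) : qmat a b c d 0 0 + qmat a b c d 1 1 = 2 * a := by
  simp [qmat]; ring

lemma qmat_pow_three (a b c d : ℝ) : qmat a b c d ^ 3 =
    qmat (a^3 - 3*a*(b^2+c^2+d^2)) (b*(3*a^2 - (b^2+c^2+d^2)))
         (c*(3*a^2 - (b^2+c^2+d^2))) (d*(3*a^2 - (b^2+c^2+d^2))) := by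
  rw [pow_succ, pow_two, qmat_mul, qmat_mul]
  congr 1 <;> ring

def Q8 : Set (Matrix (Fin 2) (Fin 2) ℂ) :=
  {qmat 1 0 0 0, qmat (-1) 0 0 0, qmat 0 1 0 0, qmat 0 (-1) 0 0,
   qmat 0 0 1 0, qmat 0 0 (-1) 0, qmat 0 0 0 1, qmat 0 0 0 (-1)}

lemma Q8_subset_twoT : Q8 ⊆ twoT := Set.subset_union_left

lemma pow_three_mem_Q8 {A : Matrix (Fin 2) (Fin 2) ℂ} (hA : A ∈ twoT) : A ^ 3 ∈ Q8 := by
  rcases hA with hA | ⟨a, b, c, d, ha, hb, hc, hd, rfl⟩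
  · rcases hA with rfl | rfl | rfl | rfl | rfl | rfl | rfl | rfl <;>
      rw [qmat_pow_three] <;> simp only [Q8, Set.mem_insert_iff, Set.mem_singleton_iff] <;>
      norm_num
  · rw [qmat_pow_three]
    rcases ha with rfl | rfl <;> rcases hb with rfl | rfl <;> rcases hc with rfl | rfl <;>
      rcases hd with rfl | rfl <;> simp only [Q8, Set.mem_insert_iff, Set.mem_singleton_iff] <;>
      norm_num

lemma exists_commutator_eq_of_mem_Q8 {A : Matrix (Fin 2) (Fin 2) ℂ} (hA : A ∈ Q8) :
    ∃ B ∈ twoT, ∃ C ∈ twoT, A = B * C * star B * star C := by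
  have hω : qmat (1/2) (1/2) (1/2) (1/2) ∈ twoT :=
    Or.inr ⟨1/2, 1/2, 1/2, 1/2, Or.inl rfl, Or.inl rfl, Or.inl rfl, Or.inl rfl, rfl⟩
  have h1 : qmat 1 0 0 0 ∈ twoT := Q8_subset_twoT (by simp [Q8])
  have hi : qmat 0 1 0 0 ∈ twoT := Q8_subset_twoT (by simp [Q8])
  have hj : qmat 0 0 1 0 ∈ twoT := Q8_subset_twoT (by simp [Q8])
  have hk : qmat 0 0 0 1 ∈ twoT := Q8_subset_twoT (by simp [Q8])
  -- conjugation by ω = (1 + i + j + k)/2 cycles i ↦ j ↦ k ↦ i, so [ω, j] = k j⁻¹ = i etc.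
  rcases hA with rfl | rfl | rfl | rfl | rfl | rfl | rfl | rfl
  · exact ⟨_, h1, _, h1, by simp only [star_qmat, qmat_mul]; norm_num⟩
  · exact ⟨_, hi, _, hj, by simp only [star_qmat, qmat_mul]; norm_num⟩
  · exact ⟨_, hω, _, hj, by simp only [star_qmat, qmat_mul]; norm_num⟩
  · exact ⟨_, hj, _, hω, by simp only [star_qmat, qmat_mul]; norm_num⟩
  · exact ⟨_, hω, _, hk, by simp only [star_qmat, qmat_mul]; norm_num⟩
  · exact ⟨_, hk, _, hω, by simp only [star_qmat, qmat_mul]; norm_num⟩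
  · exact ⟨_, hω, _, hi, by simp only [star_qmat, qmat_mul]; norm_num⟩
  · exact ⟨_, hi, _, hω, by simp only [star_qmat, qmat_mul]; norm_num⟩

lemma diag_sum_eq_one_or_neg_one {A : Matrix (Fin 2) (Fin 2) ℂ} (hA : A ∈ twoT) (hQ : A ∉ Q8) :
    A 0 0 + A 1 1 = 1 ∨ A 0 0 + A 1 1 = -1 := by
  rcases hA with hA | ⟨a, b, c, d, ha, -, -, -, rfl⟩
  · exact absurd hA hQ
  · rw [qmat_diag_sum]
    rcases ha with rfl | rfl <;> norm_num

section ProdSubgroup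

variable {G₁ G₂ : Type*} [Group G₁] [Group G₂]

def kerSnd (S : Subgroup (G₁ × G₂)) : Subgroup G₁ := S.comap (MonoidHom.inl G₁ G₂)

lemma mem_kerSnd {S : Subgroup (G₁ × G₂)} {g : G₁} : g ∈ kerSnd S ↔ (g, 1) ∈ S := Iff.rfl

instance {S : Subgroup (G₁ × G₂)} [Finite S] : Finite (kerSnd S) :=
  Finite.of_injective (fun g : kerSnd S => (⟨(g.1, 1), g.2⟩ : S))
    fun _ _ h => Subtype.ext (congrArg (fun x : S => x.1.1) h)

lemma mk_mem_iff_mem_kerSnd {S : Subgroup (G₁ × G₂)} {p : G₁ × G₂} (hp : p ∈ S) (g : G₁) :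
    (g, p.2) ∈ S ↔ g * p.1⁻¹ ∈ kerSnd S := by
  have h : ((g * p.1⁻¹, 1) : G₁ × G₂) * p = (g, p.2) := by ext <;> simp
  rw [mem_kerSnd, ← h, mul_mem_cancel_right hp]

end ProdSubgroup

lemma mk_one_commutator_mem {G₁ G₂ : Type*} [CommGroup G₁] [Group G₂] {S : Subgroup (G₁ × G₂)}
    {p q : G₁ × G₂} (hp : p ∈ S) (hq : q ∈ S) : ((1 : G₁), p.2 * q.2 * p.2⁻¹ * q.2⁻¹) ∈ S := by
  have h : p * q * p⁻¹ * q⁻¹ = ((1 : G₁), p.2 * q.2 * p.2⁻¹ * q.2⁻¹) := by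
    ext
    · simp only [Prod.fst_mul, Prod.fst_inv]; exact mul_inv_eq_one.mpr (mul_inv_cancel_comm _ _)
    · rfl
  exact h ▸ mul_mem (mul_mem (mul_mem hp hq) (inv_mem hp)) (inv_mem hq)

lemma m2_injective : Function.Injective m2 := fun _ _ h => Subtype.ext (Subtype.ext h)

lemma m2_mul (x y : G2) : m2 (x * y) = m2 x * m2 y := rfl

lemma m2_pow (x : G2) (n : ℕ) : m2 (x ^ n) = m2 x ^ n :=
  map_pow (UG2.subtype.comp SU2.subtype) x n

section Lifts

variable {Ht : Subgroup (↥(unitary ℂ) × G2)}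
  (hproj : (fun p : ↥(unitary ℂ) × G2 => m2 p.2) '' (Ht : Set _) = twoT)
include hproj

lemma m2_snd_mem_twoT {p : ↥(unitary ℂ) × G2} (hp : p ∈ Ht) : m2 p.2 ∈ twoT :=
  hproj ▸ ⟨p, hp, rfl⟩

lemma exists_mem_m2_snd_eq {A : Matrix (Fin 2) (Fin 2) ℂ} (hA : A ∈ twoT) :
    ∃ p ∈ Ht, m2 p.2 = A := by
  rw [← hproj] at hA
  exact hA

lemma exists_mk_one_mem_of_mem_Q8 {A : Matrix (Fin 2) (Fin 2) ℂ} (hA : A ∈ Q8) :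
    ∃ g : G2, (1, g) ∈ Ht ∧ m2 g = A := by
  obtain ⟨B, hB, C, hC, rfl⟩ := exists_commutator_eq_of_mem_Q8 hA
  obtain ⟨p, hp, rfl⟩ := exists_mem_m2_snd_eq hproj hB
  obtain ⟨q, hq, rfl⟩ := exists_mem_m2_snd_eq hproj hC
  exact ⟨_, mk_one_commutator_mem hp hq, rfl⟩

lemma fst_mem_kerSnd_of_mem_Q8 {p : ↥(unitary ℂ) × G2} (hp : p ∈ Ht) (hQ : m2 p.2 ∈ Q8) :
    p.1 ∈ kerSnd Ht := by
  obtain ⟨g, hg, hgp⟩ := exists_mk_one_mem_of_mem_Q8 hproj hQ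
  obtain rfl : g = p.2 := m2_injective hgp
  simpa using (mk_mem_iff_mem_kerSnd hg p.1).mp hp

lemma pow_three_fst_mem_kerSnd {p : ↥(unitary ℂ) × G2} (hp : p ∈ Ht) :
    p.1 ^ 3 ∈ kerSnd Ht :=
  fst_mem_kerSnd_of_mem_Q8 hproj (pow_mem hp 3)
    (by simpa only [Prod.pow_snd, m2_pow] using pow_three_mem_Q8 (m2_snd_mem_twoT hproj hp))

end Lifts

section FiniteSubgroupUnitary

variable (K : Subgroup ↥(unitary ℂ)) [Finite K]

lemma exists_mem_isPrimitiveRoot_coe : ∃ σ ∈ K, IsPrimitiveRoot (σ : ℂ) (Nat.card K) := by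
  let ι : K →* ℂ := (unitary ℂ).subtype.comp K.subtype
  have hι : Function.Injective ι := Subtype.val_injective.comp Subtype.val_injective
  have : IsCyclic K := isCyclic_of_injective_ringHom ι hι
  obtain ⟨σ, hσ⟩ := IsCyclic.exists_ofOrder_eq_natCard (α := K)
  refine ⟨σ, σ.2, ?_⟩
  rw [← hσ, ← orderOf_injective ι hι σ]
  exact IsPrimitiveRoot.orderOf (ι σ)

variable {K}

lemma mem_iff_coe_pow_card_eq_one {v : ↥(unitary ℂ)} : v ∈ K ↔ (v : ℂ) ^ Nat.card K = 1 := by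
  refine ⟨fun hv => ?_, fun hv => ?_⟩
  · have h : (⟨v, hv⟩ : K) ^ Nat.card K = 1 := pow_card_eq_one'
    simpa only [SubmonoidClass.coe_pow, OneMemClass.coe_one] using
      congrArg (fun x : K => ((x : ↥(unitary ℂ)) : ℂ)) h
  · obtain ⟨σ, hσK, hσ⟩ := exists_mem_isPrimitiveRoot_coe K
    obtain ⟨i, -, hi⟩ := hσ.eq_pow_of_pow_eq_one hv
    obtain rfl : σ ^ i = v := Subtype.ext (by simpa using hi)
    exact pow_mem hσK i

end FiniteSubgroupUnitary

lemma Complex.mem_unitary_of_norm_eq_one {u : ℂ} (hu : ‖u‖ = 1) : u ∈ unitary ℂ :=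
  Unitary.mem_iff.mpr ⟨by simp [Complex.conj_mul', hu], by simp [Complex.mul_conj', hu]⟩

lemma pow_four_or_pow_six_eq_one_of_two_mul_re_eq_int {w : ℂ} (hw : ‖w‖ = 1) {n : ℤ}
    (hn : 2 * w.re = n) : w ^ 4 = 1 ∨ w ^ 6 = 1 := by
  have hquad : w ^ 2 - n * w + 1 = 0 := by
    have hconj : w * (starRingEnd ℂ) w = 1 := by simp [Complex.mul_conj', hw]
    have hsum : w + (starRingEnd ℂ) w = n := by rw [Complex.add_conj]; exact_mod_cast hn
    linear_combination w * hsum - hconj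
  have hbound : |(n : ℝ)| ≤ 2 := by
    rw [← hn, abs_mul, abs_two]
    linarith [hw ▸ Complex.abs_re_le_norm w]
  obtain ⟨hlo, hhi⟩ := abs_le.mp hbound
  have hlo' : -2 ≤ n := by exact_mod_cast hlo
  have hhi' : n ≤ 2 := by exact_mod_cast hhi
  interval_cases n <;> push_cast at hquad
  · have hw : w + 1 = 0 := pow_eq_zero_iff two_ne_zero |>.mp (by linear_combination hquad)
    left; linear_combination (w ^ 3 - w ^ 2 + w - 1) * hw
  · right; linear_combination (w - 1) * (w ^ 3 + 1) * hquad
  · left; linear_combination (w ^ 2 - 1) * hquad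
  · right; linear_combination (w + 1) * (w ^ 3 - 1) * hquad
  · have hw : w - 1 = 0 := pow_eq_zero_iff two_ne_zero |>.mp (by linear_combination hquad)
    left; linear_combination (w ^ 3 + w ^ 2 + w + 1) * hw

lemma exists_two_mul_re_eq_int {w : ℂ} (hw : ‖w‖ = 1) {a b : ℤ} (ha : 4 * w.re = a)
    (hb : 4 * (w ^ 2).re = b) : ∃ n : ℤ, 2 * w.re = n := by
  have hre2 : (w ^ 2).re = 2 * w.re ^ 2 - 1 := by
    have h := Complex.sq_norm w
    rw [hw, Complex.normSq_apply] at h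
    simp only [sq, Complex.mul_re]
    linarith
  have hab : ((a ^ 2 : ℤ) : ℝ) = ((2 * b + 8 : ℤ) : ℝ) := by
    push_cast; rw [← ha, ← hb, hre2]; ring
  obtain ⟨n, hn⟩ : Even a := by
    refine (Int.even_pow' two_ne_zero).mp ⟨b + 4, ?_⟩
    have := Int.cast_injective hab
    linarith
  exact ⟨n, by rw [hn] at ha; push_cast at ha; linarith⟩

lemma isPrimitiveRoot_eQ_one_third : IsPrimitiveRoot (eQ (1/3)) 3 := by
  convert Complex.isPrimitiveRoot_exp 3 three_ne_zero using 2
  simp only [eQ]; push_cast; ring_nf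

lemma card_eq_six_or_twelve_or_eighteen {K : Subgroup ↥(unitary ℂ)} [Finite K]
    (hneg : ∃ u ∈ K, (u : ℂ) = -1) (hzeta : ∃ u ∈ K, (u : ℂ) = eQ (1/3))
    (hre : ∀ u ∈ K, ∃ n : ℤ, 4 * ((u : ℂ) ^ 3).re = n) :
    Nat.card K = 6 ∨ Nat.card K = 12 ∨ Nat.card K = 18 := by
  have h2 : 2 ∣ Nat.card K := by
    obtain ⟨u, hu, hu1⟩ := hneg
    have h := mem_iff_coe_pow_card_eq_one.mp hu
    rw [hu1, neg_one_pow_eq_one_iff_even (by norm_num)] at h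
    exact even_iff_two_dvd.mp h
  have h3 : 3 ∣ Nat.card K := by
    obtain ⟨u, hu, hu1⟩ := hzeta
    have h := mem_iff_coe_pow_card_eq_one.mp hu
    rw [hu1] at h
    exact isPrimitiveRoot_eQ_one_third.dvd_of_pow_eq_one _ h
  obtain ⟨σ, hσK, hσ⟩ := exists_mem_isPrimitiveRoot_coe K
  have hnorm : ‖(σ : ℂ) ^ 3‖ = 1 := by simp [CStarRing.norm_coe_unitary]
  obtain ⟨a, ha⟩ := hre σ hσK
  obtain ⟨b, hb⟩ := hre (σ ^ 2) (pow_mem hσK 2)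
  rw [SubmonoidClass.coe_pow, ← pow_mul, show 2 * 3 = 3 * 2 from rfl, pow_mul] at hb
  obtain ⟨n, hn⟩ := exists_two_mul_re_eq_int hnorm ha hb
  have hdvd : Nat.card K ∣ 12 ∨ Nat.card K ∣ 18 := by
    rcases pow_four_or_pow_six_eq_one_of_two_mul_re_eq_int hnorm hn with h | h <;>
      rw [← pow_mul] at h
    exacts [Or.inl (hσ.dvd_of_pow_eq_one _ h), Or.inr (hσ.dvd_of_pow_eq_one _ h)]
  have hle : Nat.card K ≤ 18 := by
    rcases hdvd with h | h <;> linarith [Nat.le_of_dvd (by norm_num) h]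
  interval_cases h : Nat.card K <;> omega

lemma norm_trace_su3block_sq {u : ℂ} (hu : ‖u‖ = 1) {A : Matrix (Fin 2) (Fin 2) ℂ} {s : ℝ}
    (hs : A 0 0 + A 1 1 = s) :
    ‖(su3block u A).trace‖ ^ 2 = 1 + s ^ 2 + 2 * s * (u ^ 3).re := by
  have huc : u * (starRingEnd ℂ) u = 1 := by simp [Complex.mul_conj', hu]
  have hinv : u⁻¹ = (starRingEnd ℂ) u := inv_eq_of_mul_eq_one_right huc
  have htr : (su3block u A).trace = u ^ 2 + (starRingEnd ℂ) u * s := by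
    simp only [su3block, Matrix.trace, Fin.sum_univ_three, Matrix.diag]
    simp [hinv, ← hs]; ring
  have hre := Complex.add_conj (u ^ 3)
  apply Complex.ofReal_injective
  rw [Complex.ofReal_pow, ← Complex.mul_conj', htr]
  simp only [map_add, map_mul, map_pow, Complex.conj_conj, Complex.conj_ofReal] at hre ⊢
  push_cast at hre ⊢
  linear_combination (u * (starRingEnd ℂ) u + 1 + (s : ℂ) ^ 2) * huc + s * hre

lemma RRC.exists_int_norm_trace_piMat_sq {H : Subgroup G3} {Ht : Subgroup (↥(unitary ℂ) × G2)}
    (hrrc : RRC H) (hH : m3 '' (H : Set G3) = piMat '' (Ht : Set _)) :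
    ∀ p ∈ Ht, ∃ k : ℤ, ‖(piMat p).trace‖ ^ 2 = k := by
  intro p hp
  obtain ⟨x, hx, hxp⟩ : piMat p ∈ m3 '' (H : Set G3) := hH ▸ ⟨p, hp, rfl⟩
  exact hxp ▸ hrrc x hx

section TraceCondition

variable {Ht : Subgroup (↥(unitary ℂ) × G2)}
  (hrrc : ∀ p ∈ Ht, ∃ k : ℤ, ‖(piMat p).trace‖ ^ 2 = k)
include hrrc

lemma exists_int_eq_one_add_sq_add_re_pow_three {p : ↥(unitary ℂ) × G2} (hp : p ∈ Ht) {s : ℤ}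
    (hs : m2 p.2 0 0 + m2 p.2 1 1 = s) :
    ∃ k : ℤ, 1 + s ^ 2 + 2 * s * ((p.1 : ℂ) ^ 3).re = k := by
  obtain ⟨k, hk⟩ := hrrc p hp
  refine ⟨k, ?_⟩
  rw [← hk, piMat, norm_trace_su3block_sq (CStarRing.norm_coe_unitary p.1) (s := s)
    (by exact_mod_cast hs)]

lemma exists_four_mul_re_pow_three_eq_int {u : ↥(unitary ℂ)} (hu : u ∈ kerSnd Ht) :
    ∃ n : ℤ, 4 * ((u : ℂ) ^ 3).re = n := by
  obtain ⟨k, hk⟩ := exists_int_eq_one_add_sq_add_re_pow_three hrrc (mem_kerSnd.mp hu) (s := 2)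
    (by simp [m2]; norm_num)
  exact ⟨k - 5, by push_cast at hk ⊢; linarith⟩

lemma exists_two_mul_re_pow_three_eq_int {p : ↥(unitary ℂ) × G2} (hp : p ∈ Ht)
    (hA : m2 p.2 ∈ twoT) (hQ : m2 p.2 ∉ Q8) : ∃ n : ℤ, 2 * ((p.1 : ℂ) ^ 3).re = n := by
  rcases diag_sum_eq_one_or_neg_one hA hQ with hs | hs
  · obtain ⟨k, hk⟩ :=
      exists_int_eq_one_add_sq_add_re_pow_three hrrc hp (s := 1) (by exact_mod_cast hs)
    exact ⟨k - 2, by push_cast at hk ⊢; linarith⟩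
  · obtain ⟨k, hk⟩ :=
      exists_int_eq_one_add_sq_add_re_pow_three hrrc hp (s := -1) (by exact_mod_cast hs)
    exact ⟨2 - k, by push_cast at hk ⊢; linarith⟩

end TraceCondition

lemma m3_injective : Function.Injective m3 := fun _ _ h => Subtype.ext (Subtype.ext h)

lemma isConjSub_sgOf_of_image_eq {H : Subgroup G3} {S : Set (Matrix (Fin 3) (Fin 3) ℂ)}
    (h : m3 '' (H : Set G3) = S) : IsConjSub H (sgOf S) := by
  refine ⟨1, ?_⟩
  have hS : {x : G3 | m3 x ∈ S} = H := by
    rw [← h]; exact Set.preimage_image_eq _ m3_injective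
  rw [sgOf, hS, Subgroup.closure_eq]
  ext x
  simp

open Classical in
/-- The `n`-th power of the `U(1)`-component of some lift of `A` to `Ht`; it does not depend on
the lift once `kerSnd Ht ⊆ μₙ` (`liftFstPow_m2_snd`), and for `n = 6` it is the character `χ`. -/
def liftFstPow (Ht : Subgroup (↥(unitary ℂ) × G2)) (n : ℕ) (A : Matrix (Fin 2) (Fin 2) ℂ) : ℂ :=
  if h : ∃ p ∈ Ht, m2 p.2 = A then ((Classical.choose h).1 : ℂ) ^ n else 1

lemma coe_unitary_ne_zero (u : ↥(unitary ℂ)) : (u : ℂ) ≠ 0 :=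
  norm_ne_zero_iff.mp (by simp [CStarRing.norm_coe_unitary])

section Classification

variable {Ht : Subgroup (↥(unitary ℂ) × G2)}

lemma su3block_mem_image_piMat [Finite (kerSnd Ht)] {q : ↥(unitary ℂ) × G2} (hq : q ∈ Ht)
    {u : ℂ} (hu : (u / q.1) ^ Nat.card (kerSnd Ht) = 1) :
    su3block u (m2 q.2) ∈ piMat '' (Ht : Set _) := by
  have hw : ‖u / q.1‖ = 1 := Complex.norm_eq_one_of_pow_eq_one hu Nat.card_pos.ne'
  let v : ↥(unitary ℂ) := ⟨u / q.1, Complex.mem_unitary_of_norm_eq_one hw⟩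
  have hv : v ∈ kerSnd Ht := mem_iff_coe_pow_card_eq_one.mpr hu
  refine ⟨(v * q.1, q.2), (mk_mem_iff_mem_kerSnd hq _).mpr (by simpa using hv), ?_⟩
  simp [piMat, v, div_mul_cancel₀ _ (coe_unitary_ne_zero q.1)]

lemma liftFstPow_m2_snd {n : ℕ} (hK : ∀ v ∈ kerSnd Ht, (v : ℂ) ^ n = 1)
    {p : ↥(unitary ℂ) × G2} (hp : p ∈ Ht) : liftFstPow Ht n (m2 p.2) = (p.1 : ℂ) ^ n := by
  have h : ∃ q ∈ Ht, m2 q.2 = m2 p.2 := ⟨p, hp, rfl⟩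
  rw [liftFstPow, dif_pos h]
  obtain ⟨hq, hqp⟩ := Classical.choose_spec h
  set q := Classical.choose h
  have hqK : q.1 * p.1⁻¹ ∈ kerSnd Ht :=
    (mk_mem_iff_mem_kerSnd hp q.1).mp (by rwa [← m2_injective hqp])
  have h1 := hK _ hqK
  rwa [Submonoid.coe_mul, Unitary.coe_inv, mul_pow, inv_pow,
    mul_inv_eq_one₀ (pow_ne_zero _ (coe_unitary_ne_zero p.1))] at h1

lemma pow_six_eq_one_of_mem_kerSnd [Finite (kerSnd Ht)] (hK6 : Nat.card (kerSnd Ht) = 6) :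
    ∀ v ∈ kerSnd Ht, (v : ℂ) ^ 6 = 1 :=
  fun _ hv => hK6 ▸ mem_iff_coe_pow_card_eq_one.mp hv

variable (hproj : (fun p : ↥(unitary ℂ) × G2 => m2 p.2) '' (Ht : Set _) = twoT)
include hproj

lemma liftFstPow_mul {n : ℕ} (hK : ∀ v ∈ kerSnd Ht, (v : ℂ) ^ n = 1)
    {A B : Matrix (Fin 2) (Fin 2) ℂ} (hA : A ∈ twoT) (hB : B ∈ twoT) :
    liftFstPow Ht n (A * B) = liftFstPow Ht n A * liftFstPow Ht n B := by
  obtain ⟨p, hp, rfl⟩ := exists_mem_m2_snd_eq hproj hA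
  obtain ⟨q, hq, rfl⟩ := exists_mem_m2_snd_eq hproj hB
  rw [← m2_mul, ← Prod.snd_mul, liftFstPow_m2_snd hK (mul_mem hp hq), liftFstPow_m2_snd hK hp,
    liftFstPow_m2_snd hK hq, Prod.fst_mul, Submonoid.coe_mul, mul_pow]

lemma image_piMat_eq_BT [Finite (kerSnd Ht)] (hall : ∀ p ∈ Ht, p.1 ∈ kerSnd Ht) :
    piMat '' (Ht : Set _) = BT (Nat.card (kerSnd Ht)) := by
  ext M
  constructor
  · rintro ⟨p, hp, rfl⟩
    exact ⟨p.1, mem_iff_coe_pow_card_eq_one.mp (hall p hp), m2 p.2, m2_snd_mem_twoT hproj hp, rfl⟩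
  · rintro ⟨u, hu, A, hA, rfl⟩
    obtain ⟨q, hq, rfl⟩ := exists_mem_m2_snd_eq hproj hA
    refine su3block_mem_image_piMat hq ?_
    rw [div_pow, hu, mem_iff_coe_pow_card_eq_one.mp (hall q hq), div_one]

lemma card_kerSnd_eq_six_of_fst_not_mem [Finite (kerSnd Ht)]
    (hrrc : ∀ p ∈ Ht, ∃ k : ℤ, ‖(piMat p).trace‖ ^ 2 = k)
    (hcard : Nat.card (kerSnd Ht) = 6 ∨ Nat.card (kerSnd Ht) = 12 ∨ Nat.card (kerSnd Ht) = 18)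
    {p₀ : ↥(unitary ℂ) × G2} (hp₀ : p₀ ∈ Ht) (hp₀K : p₀.1 ∉ kerSnd Ht) :
    Nat.card (kerSnd Ht) = 6 := by
  have hQ : m2 p₀.2 ∉ Q8 := fun h => hp₀K (fst_mem_kerSnd_of_mem_Q8 hproj hp₀ h)
  have hcoset : ∀ v ∈ kerSnd Ht,
      ((v : ℂ) * p₀.1) ^ 12 = 1 ∨ ((v : ℂ) * p₀.1) ^ 18 = 1 := by
    intro v hv
    have hmem : (v * p₀.1, p₀.2) ∈ Ht := (mk_mem_iff_mem_kerSnd hp₀ _).mpr (by simpa using hv)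
    obtain ⟨n, hn⟩ :=
      exists_two_mul_re_pow_three_eq_int hrrc hmem (m2_snd_mem_twoT hproj hmem) hQ
    have hnorm : ‖((v * p₀.1 : ↥(unitary ℂ)) : ℂ) ^ 3‖ = 1 := by
      simp [CStarRing.norm_coe_unitary]
    rcases pow_four_or_pow_six_eq_one_of_two_mul_re_eq_int hnorm hn with h | h <;>
      rw [← pow_mul, Submonoid.coe_mul] at h
    exacts [Or.inl h, Or.inr h]
  have hcube : (p₀.1 : ℂ) ^ (3 * Nat.card (kerSnd Ht)) = 1 := by
    rw [pow_mul, ← SubmonoidClass.coe_pow]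
    exact mem_iff_coe_pow_card_eq_one.mp (pow_three_fst_mem_kerSnd hproj hp₀)
  have hnot : (p₀.1 : ℂ) ^ Nat.card (kerSnd Ht) ≠ 1 :=
    fun h => hp₀K (mem_iff_coe_pow_card_eq_one.mpr h)
  have hcoset_one := hcoset 1 (one_mem _)
  rw [OneMemClass.coe_one, one_mul] at hcoset_one
  obtain ⟨σ, hσK, hσ⟩ := exists_mem_isPrimitiveRoot_coe (kerSnd Ht)
  rcases hcard with h | h | h
  · exact h
  · rw [h] at hcube hnot hσ
    have h18 : (p₀.1 : ℂ) ^ 18 = 1 := hcoset_one.resolve_left hnot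
    rcases hcoset σ hσK with h' | h'
    · rw [mul_pow, hσ.pow_eq_one, one_mul] at h'
      exact absurd h' hnot
    · rw [mul_pow, h18, mul_one] at h'
      exact absurd (hσ.dvd_of_pow_eq_one _ h') (by norm_num)
  · rw [h] at hcube hnot
    have h12 : (p₀.1 : ℂ) ^ 12 = 1 := hcoset_one.resolve_right hnot
    have h6 : (p₀.1 : ℂ) ^ 6 = 1 := by
      simpa using pow_gcd_eq_one.mpr ⟨h12, hcube⟩
    exact absurd (by rw [show 18 = 6 * 3 from rfl, pow_mul, h6, one_pow]) hnot

section CardSix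

variable [Finite (kerSnd Ht)] (hK6 : Nat.card (kerSnd Ht) = 6)
include hK6

lemma fst_pow_eighteen_eq_one {p : ↥(unitary ℂ) × G2} (hp : p ∈ Ht) : (p.1 : ℂ) ^ 18 = 1 := by
  have h := pow_six_eq_one_of_mem_kerSnd hK6 _ (pow_three_fst_mem_kerSnd hproj hp)
  rwa [SubmonoidClass.coe_pow, ← pow_mul] at h

lemma liftFstPow_pow_three {A : Matrix (Fin 2) (Fin 2) ℂ} (hA : A ∈ twoT) :
    liftFstPow Ht 6 A ^ 3 = 1 := by
  obtain ⟨p, hp, rfl⟩ := exists_mem_m2_snd_eq hproj hA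
  rw [liftFstPow_m2_snd (pow_six_eq_one_of_mem_kerSnd hK6) hp, ← pow_mul]
  exact fst_pow_eighteen_eq_one hproj hK6 hp

lemma exists_liftFstPow_eq {p₀ : ↥(unitary ℂ) × G2} (hp₀ : p₀ ∈ Ht)
    (hp₀K : p₀.1 ∉ kerSnd Ht) {ζ : ℂ} (hζ : ζ ^ 3 = 1) : ∃ A ∈ twoT, liftFstPow Ht 6 A = ζ := by
  have hK := pow_six_eq_one_of_mem_kerSnd hK6
  have hω : IsPrimitiveRoot ((p₀.1 : ℂ) ^ 6) 3 := by
    have h3 : ((p₀.1 : ℂ) ^ 6) ^ 3 = 1 := by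
      rw [← pow_mul]; exact fst_pow_eighteen_eq_one hproj hK6 hp₀
    have h1 : (p₀.1 : ℂ) ^ 6 ≠ 1 := fun h => hp₀K (mem_iff_coe_pow_card_eq_one.mpr (hK6 ▸ h))
    have h := IsPrimitiveRoot.orderOf ((p₀.1 : ℂ) ^ 6)
    rwa [orderOf_eq_prime h3 h1] at h
  obtain ⟨i, -, rfl⟩ := hω.eq_pow_of_pow_eq_one hζ
  refine ⟨m2 (p₀ ^ i).2, m2_snd_mem_twoT hproj (pow_mem hp₀ i), ?_⟩
  rw [liftFstPow_m2_snd hK (pow_mem hp₀ i), Prod.pow_fst, SubmonoidClass.coe_pow, ← pow_mul,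
    ← pow_mul, mul_comm]

lemma image_piMat_eq_BT11 : piMat '' (Ht : Set _) = BT11 (liftFstPow Ht 6) := by
  have hK := pow_six_eq_one_of_mem_kerSnd hK6
  ext M
  constructor
  · rintro ⟨p, hp, rfl⟩
    exact ⟨p.1, fst_pow_eighteen_eq_one hproj hK6 hp, m2 p.2, m2_snd_mem_twoT hproj hp,
      (liftFstPow_m2_snd hK hp).symm, rfl⟩
  · rintro ⟨u, -, A, hA, hu, rfl⟩
    obtain ⟨q, hq, rfl⟩ := exists_mem_m2_snd_eq hproj hA
    refine su3block_mem_image_piMat hq ?_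
    rw [hK6, div_pow, hu, liftFstPow_m2_snd hK hq,
      div_self (pow_ne_zero _ (coe_unitary_ne_zero q.1))]

end CardSix

end Classification

theorem statement12 (Ht : Subgroup (↥(unitary ℂ) × G2)) (hfin : Finite ↥Ht)
    (hneg : ∃ x ∈ Ht, (x.1 : ℂ) = -1 ∧ m2 x.2 = -1)
    (hzeta : ∃ x ∈ Ht, (x.1 : ℂ) = eQ (1/3) ∧ m2 x.2 = 1)
    (hproj : (fun p : ↥(unitary ℂ) × G2 => m2 p.2) '' (Ht : Set _) = twoT)
    (H : Subgroup G3)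
    (hH : m3 '' (H : Set G3) = piMat '' (Ht : Set _))
    (hrrc : RRC H) :
    IsConjSub H (sgOf (BT 6)) ∨ IsConjSub H (sgOf (BT 12)) ∨
    IsConjSub H (sgOf (BT 18)) ∨
    ∃ χ : Matrix (Fin 2) (Fin 2) ℂ → ℂ,
      (∀ A ∈ twoT, ∀ B ∈ twoT, χ (A * B) = χ A * χ B) ∧
      (∀ A ∈ twoT, (χ A) ^ 3 = 1) ∧
      (∀ ζ : ℂ, ζ ^ 3 = 1 → ∃ A ∈ twoT, χ A = ζ) ∧
      IsConjSub H (sgOf (BT11 χ)) := by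
  have hrrc' := hrrc.exists_int_norm_trace_piMat_sq hH
  have hconj := fun S (hS : piMat '' (Ht : Set _) = S) => isConjSub_sgOf_of_image_eq (hH.trans hS)
  obtain ⟨x, hx, hx1, hx2⟩ := hneg
  obtain ⟨y, hy, hy1, hy2⟩ := hzeta
  have hcard := card_eq_six_or_twelve_or_eighteen
    ⟨x.1, fst_mem_kerSnd_of_mem_Q8 hproj hx (by simp [hx2, Q8, ← qmat_neg_one]), hx1⟩
    ⟨y.1, fst_mem_kerSnd_of_mem_Q8 hproj hy (by simp [hy2, Q8, ← qmat_one]), hy1⟩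
    fun u hu => exists_four_mul_re_pow_three_eq_int hrrc' hu
  by_cases hall : ∀ p ∈ Ht, p.1 ∈ kerSnd Ht
  · have hBT := image_piMat_eq_BT hproj hall
    rcases hcard with h | h | h <;> rw [h] at hBT
    exacts [Or.inl (hconj _ hBT), Or.inr (Or.inl (hconj _ hBT)),
      Or.inr (Or.inr (Or.inl (hconj _ hBT)))]
  · obtain ⟨p₀, hp₀, hp₀K⟩ := not_forall₂.mp hall
    have h6 := card_kerSnd_eq_six_of_fst_not_mem hproj hrrc' hcard hp₀ hp₀K
    exact Or.inr (Or.inr (Or.inr ⟨liftFstPow Ht 6,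
      fun A hA B hB => liftFstPow_mul hproj (pow_six_eq_one_of_mem_kerSnd h6) hA hB,
      fun A hA => liftFstPow_pow_three hproj h6 hA,
      fun ζ hζ => exists_liftFstPow_eq hproj h6 hp₀ hp₀K hζ,
      hconj _ (image_piMat_eq_BT11 hproj h6)⟩))
end
end

section
/- For every positive integer n, the real number (1 + 2·cos(2π/n))² is an integer if and only if n ∈ {1, 2, 3, 4, 6}. -/
/-!
For `n ≥ 3` the angle `2π/n` lies in `(0, 2π/3]`, so `cos (2π/n)` increases strictly with `n`
and stays in `[-1/2, 1)`; hence `(1 + 2 cos (2π/n))²` increases strictly from `0` towards `9`.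
Its values at `n = 3, 4, 6` are `0, 1, 4`, and low-order Taylor bounds for `sin` and `cos` show
that it jumps over the other integers below `9`: over `2` and `3` at `n = 5`, and over `5, 6, 7, 8`
between `n = 6, 7`, `8, 9`, `10, 11` and `15, 16`. Together with `n = 1, 2` this leaves exactly
`n ∈ {1, 2, 3, 4, 6}`.
-/

open Real

noncomputable def sqOnePlusTwoCos (n : ℕ) : ℝ := (1 + 2 * cos (2 * π / n)) ^ 2

lemma two_pi_div_mem_Ioc {n : ℕ} (hn : 2 ≤ n) : 2 * π / n ∈ Set.Ioc 0 π := by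
  have hn' : (2 : ℝ) ≤ n := by exact_mod_cast hn
  refine ⟨by positivity, ?_⟩
  rw [div_le_iff₀ (by linarith)]
  nlinarith [pi_pos]

lemma cos_two_pi_div_lt_cos_two_pi_div {m n : ℕ} (hm : 2 ≤ m) (hmn : m < n) :
    cos (2 * π / m) < cos (2 * π / n) := by
  have hm' : (0 : ℝ) < m := by exact_mod_cast (by omega : 0 < m)
  have hmn' : (m : ℝ) < n := by exact_mod_cast hmn
  exact cos_lt_cos_of_nonneg_of_le_pi (two_pi_div_mem_Ioc (hm.trans hmn.le)).1.le
    (two_pi_div_mem_Ioc hm).2 (div_lt_div_of_pos_left (by positivity) hm' hmn')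

lemma cos_two_pi_div_lt_one {n : ℕ} (hn : 2 ≤ n) : cos (2 * π / n) < 1 := by
  simpa using cos_lt_cos_of_nonneg_of_le_pi le_rfl (two_pi_div_mem_Ioc hn).2
    (two_pi_div_mem_Ioc hn).1

lemma cos_two_pi_div_three : cos (2 * π / 3) = -1 / 2 := by
  rw [show 2 * π / 3 = π - π / 3 by ring, cos_pi_sub, cos_pi_div_three]
  norm_num

lemma neg_half_le_cos_two_pi_div {n : ℕ} (hn : 3 ≤ n) : -1 / 2 ≤ cos (2 * π / n) := by
  rcases hn.eq_or_lt with rfl | hn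
  · simp [cos_two_pi_div_three]
  · simpa [cos_two_pi_div_three] using
      (cos_two_pi_div_lt_cos_two_pi_div (m := 3) (by norm_num) hn).le

lemma strictMono_sqOnePlusTwoCos_add_three : StrictMono fun m ↦ sqOnePlusTwoCos (m + 3) := by
  refine strictMono_nat_of_lt_succ fun m ↦ ?_
  have hlt := cos_two_pi_div_lt_cos_two_pi_div (m := m + 3) (n := m + 1 + 3) (by omega) (by omega)
  have hnonneg := neg_half_le_cos_two_pi_div (n := m + 3) (by omega)
  exact pow_lt_pow_left₀ (by linarith) (by linarith) two_ne_zero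

lemma sqOnePlusTwoCos_lt_nine {n : ℕ} (hn : 2 ≤ n) : sqOnePlusTwoCos n < 9 := by
  have := cos_two_pi_div_lt_one hn
  have := neg_one_le_cos (2 * π / n)
  unfold sqOnePlusTwoCos
  nlinarith

lemma sqOnePlusTwoCos_one : sqOnePlusTwoCos 1 = 9 := by
  norm_num [sqOnePlusTwoCos]

lemma sqOnePlusTwoCos_two : sqOnePlusTwoCos 2 = 1 := by
  norm_num [sqOnePlusTwoCos]

lemma sqOnePlusTwoCos_three : sqOnePlusTwoCos 3 = 0 := by
  norm_num [sqOnePlusTwoCos, cos_two_pi_div_three]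

lemma sqOnePlusTwoCos_four : sqOnePlusTwoCos 4 = 1 := by
  norm_num [sqOnePlusTwoCos, show 2 * π / 4 = π / 2 by ring]

lemma sqOnePlusTwoCos_six : sqOnePlusTwoCos 6 = 4 := by
  norm_num [sqOnePlusTwoCos, show 2 * π / 6 = π / 3 by ring]

lemma sub_cube_div_six_le_sin {y₀ y : ℝ} (hy₀ : 0 ≤ y₀) (hy : y₀ ≤ y) (hy₁ : y ≤ 1) :
    y₀ - y₀ ^ 3 / 6 ≤ sin y := by
  have hsq : y ^ 2 + y * y₀ + y₀ ^ 2 ≤ 6 := by nlinarith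
  have hmono : y₀ - y₀ ^ 3 / 6 ≤ y - y ^ 3 / 6 := by
    nlinarith [mul_nonneg (sub_nonneg.2 hy) (sub_nonneg.2 hsq)]
  exact hmono.trans (sin_ge_sub_cube (hy₀.trans hy))

lemma cos_le_one_sub_two_mul_sq {x s : ℝ} (hs : 0 ≤ s) (h : s ≤ sin (x / 2)) :
    cos x ≤ 1 - 2 * s ^ 2 := by
  rw [show x = 2 * (x / 2) by ring, cos_two_mul_eq_one_sub]
  nlinarith

lemma lt_sqOnePlusTwoCos {n : ℕ} {c : ℝ} (hc : -1 / 2 ≤ c) (h : c < cos (2 * π / n)) :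
    (1 + 2 * c) ^ 2 < sqOnePlusTwoCos n :=
  pow_lt_pow_left₀ (by linarith) (by linarith) two_ne_zero

lemma lt_sqOnePlusTwoCos_of_le {n : ℕ} {c x : ℝ} (hc : -1 / 2 ≤ c) (hx : 2 * π / n ≤ x)
    (h : c < 1 - x ^ 2 / 2) : (1 + 2 * c) ^ 2 < sqOnePlusTwoCos n := by
  refine lt_sqOnePlusTwoCos hc (h.trans_le (le_trans ?_ one_sub_sq_div_two_le_cos))
  have : 0 ≤ 2 * π / n := by positivity
  nlinarith

lemma sqOnePlusTwoCos_lt_of_le_sin {n : ℕ} {c s : ℝ} (hn : 3 ≤ n) (hs : 0 ≤ s)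
    (h : s ≤ sin (π / n)) (hc : 1 - 2 * s ^ 2 < c) : sqOnePlusTwoCos n < (1 + 2 * c) ^ 2 := by
  have hcos : cos (2 * π / n) < c := by
    refine (cos_le_one_sub_two_mul_sq hs ?_).trans_lt hc
    rwa [mul_div_assoc, mul_div_cancel_left₀ _ two_ne_zero]
  have := neg_half_le_cos_two_pi_div hn
  exact pow_lt_pow_left₀ (by linarith) (by linarith) two_ne_zero

-- At `n = 5` and `n = 7` the bound `1 - x²/2 ≤ cos x` is too weak; the cubic lower bound for
-- `sin (π/2 - x) = cos x` suffices.
lemma sqOnePlusTwoCos_five_mem_Ioo : sqOnePlusTwoCos 5 ∈ Set.Ioo 2 3 := by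
  have hπ := pi_gt_d2
  have hπ' := pi_lt_d2
  constructor
  · refine lt_of_lt_of_le (by norm_num) (lt_sqOnePlusTwoCos (c := 0.208) (by norm_num) ?_).le
    rw [← sin_pi_div_two_sub]
    refine lt_of_lt_of_le (by norm_num) (sub_cube_div_six_le_sin (y₀ := 0.314) (by norm_num) ?_ ?_)
      <;> push_cast <;> linarith
  · refine (sqOnePlusTwoCos_lt_of_le_sin (c := 0.36) (s := 0.58) (by norm_num) (by norm_num) ?_
      (by norm_num)).trans (by norm_num)
    refine le_trans (by norm_num) (sub_cube_div_six_le_sin (y₀ := 0.628) (by norm_num) ?_ ?_)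
      <;> push_cast <;> linarith

lemma five_lt_sqOnePlusTwoCos_seven : 5 < sqOnePlusTwoCos 7 := by
  have hπ := pi_gt_d2
  have hπ' := pi_lt_d2
  refine lt_of_lt_of_le (by norm_num) (lt_sqOnePlusTwoCos (c := 0.6181) (by norm_num) ?_).le
  rw [← sin_pi_div_two_sub]
  refine lt_of_lt_of_le (by norm_num) (sub_cube_div_six_le_sin (y₀ := 0.6728) (by norm_num) ?_ ?_)
    <;> push_cast <;> linarith

lemma sqOnePlusTwoCos_eight_lt_six : sqOnePlusTwoCos 8 < 6 := by
  have hπ := pi_gt_d2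
  have hπ' := pi_lt_d2
  refine (sqOnePlusTwoCos_lt_of_le_sin (c := 0.72) (s := 0.38) (by norm_num) (by norm_num) ?_
    (by norm_num)).trans (by norm_num)
  refine le_trans (by norm_num) (sub_cube_div_six_le_sin (y₀ := 0.3925) (by norm_num) ?_ ?_)
    <;> push_cast <;> linarith

lemma six_lt_sqOnePlusTwoCos_nine : 6 < sqOnePlusTwoCos 9 := by
  refine lt_of_lt_of_le (by norm_num)
    (lt_sqOnePlusTwoCos_of_le (c := 0.73) (x := 0.7) (by norm_num) ?_ (by norm_num)).le
  push_cast
  linarith [pi_lt_d2]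

lemma sqOnePlusTwoCos_ten_lt_seven : sqOnePlusTwoCos 10 < 7 := by
  have hπ := pi_gt_d2
  have hπ' := pi_lt_d2
  refine (sqOnePlusTwoCos_lt_of_le_sin (c := 0.82) (s := 0.305) (by norm_num) (by norm_num) ?_
    (by norm_num)).trans (by norm_num)
  refine le_trans (by norm_num) (sub_cube_div_six_le_sin (y₀ := 0.314) (by norm_num) ?_ ?_)
    <;> push_cast <;> linarith

lemma seven_lt_sqOnePlusTwoCos_eleven : 7 < sqOnePlusTwoCos 11 := by
  refine lt_of_lt_of_le (by norm_num)
    (lt_sqOnePlusTwoCos_of_le (c := 0.83) (x := 0.573) (by norm_num) ?_ (by norm_num)).le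
  push_cast
  linarith [pi_lt_d2]

lemma sqOnePlusTwoCos_fifteen_lt_eight : sqOnePlusTwoCos 15 < 8 := by
  have hπ := pi_gt_d2
  have hπ' := pi_lt_d2
  refine (sqOnePlusTwoCos_lt_of_le_sin (c := 0.9142) (s := 0.2077) (by norm_num) (by norm_num) ?_
    (by norm_num)).trans (by norm_num)
  refine le_trans (by norm_num) (sub_cube_div_six_le_sin (y₀ := 0.2093) (by norm_num) ?_ ?_)
    <;> push_cast <;> linarith

lemma eight_lt_sqOnePlusTwoCos_sixteen : 8 < sqOnePlusTwoCos 16 := by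
  refine lt_of_lt_of_le (by norm_num)
    (lt_sqOnePlusTwoCos_of_le (c := 0.9143) (x := 0.394) (by norm_num) ?_ (by norm_num)).le
  push_cast
  linarith [pi_lt_d2]

lemma eq_three_or_four_or_six_of_sqOnePlusTwoCos_eq_intCast {n : ℕ} (hn : 3 ≤ n) {k : ℤ}
    (hk : sqOnePlusTwoCos n = k) : n = 3 ∨ n = 4 ∨ n = 6 := by
  obtain ⟨m, rfl⟩ : ∃ m, n = m + 3 := ⟨n - 3, by omega⟩
  have hu := strictMono_sqOnePlusTwoCos_add_three
  have eq_of_value (a : ℕ) (x : ℤ) (ha : sqOnePlusTwoCos (a + 3) = x) (hx : k = x) : m = a :=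
    hu.injective (hk.trans (hx ▸ ha.symm))
  have not_between (a : ℕ) (x : ℤ) (hx : k = x) (h₁ : sqOnePlusTwoCos (a + 3) < x)
      (h₂ : x < sqOnePlusTwoCos (a + 1 + 3)) : False := by
    subst hx
    exact hu.monotone.ne_of_lt_of_lt_nat a h₁ h₂ m hk
  have hk₀ : 0 ≤ k := by
    have : 0 ≤ sqOnePlusTwoCos (m + 3) := sq_nonneg _
    exact_mod_cast hk ▸ this
  have hk₉ : k < 9 := by exact_mod_cast hk ▸ sqOnePlusTwoCos_lt_nine (by omega)
  obtain ⟨h₅, h₅'⟩ := sqOnePlusTwoCos_five_mem_Ioo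
  have h₆ : sqOnePlusTwoCos (3 + 3) = 4 := sqOnePlusTwoCos_six
  interval_cases k
  · simp [eq_of_value 0 0 (by simpa using sqOnePlusTwoCos_three) rfl]
  · simp [eq_of_value 1 1 (by simpa using sqOnePlusTwoCos_four) rfl]
  · exact (not_between 1 2 rfl (by norm_num [sqOnePlusTwoCos_four]) h₅).elim
  · exact (not_between 2 3 rfl h₅' (by norm_num [h₆])).elim
  · simp [eq_of_value 3 4 (by simpa using h₆) rfl]
  · exact (not_between 3 5 rfl (by norm_num [h₆]) five_lt_sqOnePlusTwoCos_seven).elim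
  · exact (not_between 5 6 rfl sqOnePlusTwoCos_eight_lt_six six_lt_sqOnePlusTwoCos_nine).elim
  · exact (not_between 7 7 rfl sqOnePlusTwoCos_ten_lt_seven seven_lt_sqOnePlusTwoCos_eleven).elim
  · exact (not_between 12 8 rfl sqOnePlusTwoCos_fifteen_lt_eight
      eight_lt_sqOnePlusTwoCos_sixteen).elim

theorem statement14 (n : ℕ) (hn : 0 < n) :
    (∃ k : ℤ, (1 + 2 * Real.cos (2 * Real.pi / n)) ^ 2 = (k : ℝ)) ↔
    n ∈ ({1, 2, 3, 4, 6} : Set ℕ) := by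
  change (∃ k : ℤ, sqOnePlusTwoCos n = k) ↔ _
  constructor
  · rintro ⟨k, hk⟩
    rcases lt_or_ge n 3 with hn₃ | hn₃
    · interval_cases n <;> simp
    · rcases eq_three_or_four_or_six_of_sqOnePlusTwoCos_eq_intCast hn₃ hk with rfl | rfl | rfl <;>
        simp
  · rintro (rfl | rfl | rfl | rfl | rfl)
    exacts [⟨9, by simpa using sqOnePlusTwoCos_one⟩, ⟨1, by simpa using sqOnePlusTwoCos_two⟩,
      ⟨0, by simpa using sqOnePlusTwoCos_three⟩, ⟨1, by simpa using sqOnePlusTwoCos_four⟩,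
      ⟨4, by simpa using sqOnePlusTwoCos_six⟩]
end

section
/- The centralizer of U(1)₃ in USp(6) equals ι(U(3)), and the normalizer of U(1)₃ in USp(6) equals the union ι(U(3)) ∪ J·ι(U(3)). Moreover, conjugation by J carries ι(A) to ι(conj(A)) for every A ∈ U(3). -/
noncomputable section

open Matrix

abbrev M6 := Matrix (Fin 3 ⊕ Fin 3) (Fin 3 ⊕ Fin 3) ℂ

/-- The matrix J = [[0, I₃], [−I₃, 0]]. -/
def J6 : M6 := Matrix.fromBlocks 0 1 (-1) 0

/-- USp(6): the set of 6×6 complex matrices that are unitary and satisfy Aᵀ·J·A = J. -/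
def USp6set : Set M6 :=
  {A | A ∈ Matrix.unitaryGroup (Fin 3 ⊕ Fin 3) ℂ ∧ Aᵀ * J6 * A = J6}

/-- ι(A) = diag(A, conj(A)). -/
def iotaM (A : Matrix (Fin 3) (Fin 3) ℂ) : M6 :=
  Matrix.fromBlocks A 0 0 (A.map (starRingEnd ℂ))

/-- ι(U(3)) : the image of the 3×3 unitary group under ι. -/
def iotaU3 : Set M6 :=
  {M | ∃ A ∈ Matrix.unitaryGroup (Fin 3) ℂ, M = iotaM A}

/-- U(1)₃ = {diag(u·I₃, conj(u)·I₃) : |u| = 1}. -/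
def U13 : Set M6 :=
  {M | ∃ u : ℂ, ‖u‖ = 1 ∧
    M = Matrix.fromBlocks (u • 1) 0 0 ((starRingEnd ℂ u) • 1)}

/-!
The key element of U(1)₃ is `phase I = diag(i·I₃, -i·I₃)`. Since `i ≠ -i`, a matrix commuting with
it is block diagonal, `diag(a, d)`; unitarity makes `a` unitary and the symplectic condition says
`aᵀ d = 1`, so `d = (aᵀ)⁻¹ = conj a`. A normalizing `g` conjugates `phase I` to some `phase v`
with `phase (v²) = g (phase I)² g⁻¹ = -1`, so `v = ±i`; if `v = -i`, then `J⁻¹ g` commutes with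
`phase I`, because conjugation by `J` maps `phase u` to `phase (conj u)`.
-/

namespace Matrix

variable {l m : Type*} [Fintype l] [Fintype m] [DecidableEq l] [DecidableEq m]

theorem commute_fromBlocks_diag_scalar {R : Type*} [CommRing R] (a : Matrix l l R)
    (d : Matrix m m R) (u v : R) :
    Commute (fromBlocks a 0 0 d) (fromBlocks (u • 1) 0 0 (v • 1)) := by
  simp [Commute, SemiconjBy, fromBlocks_multiply]

theorem offDiag_blocks_eq_zero_of_commute {R : Type*} [CommRing R] [IsDomain R]
    {a : Matrix l l R} {b : Matrix l m R} {c : Matrix m l R} {d : Matrix m m R} {u v : R}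
    (huv : u ≠ v) (h : Commute (fromBlocks a b c d) (fromBlocks (u • 1) 0 0 (v • 1))) :
    b = 0 ∧ c = 0 := by
  simp only [Commute, SemiconjBy, fromBlocks_multiply, fromBlocks_inj, Matrix.mul_zero,
    Matrix.zero_mul, add_zero, zero_add, Matrix.mul_smul, Matrix.smul_mul, Matrix.mul_one,
    Matrix.one_mul] at h
  obtain ⟨-, hb, hc, -⟩ := h
  have hne : u - v ≠ 0 := sub_ne_zero.mpr huv
  constructor
  · exact (smul_eq_zero.mp (by rw [sub_smul, ← hb, sub_self])).resolve_left hne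
  · exact (smul_eq_zero.mp (by rw [sub_smul, hc, sub_self])).resolve_left hne

theorem fromBlocks_diag_mem_unitaryGroup_iff {R : Type*} [CommRing R] [StarRing R]
    {a : Matrix l l R} {d : Matrix m m R} :
    fromBlocks a 0 0 d ∈ unitaryGroup (l ⊕ m) R ↔
      a ∈ unitaryGroup l R ∧ d ∈ unitaryGroup m R := by
  simp [mem_unitaryGroup_iff, star_eq_conjTranspose, fromBlocks_conjTranspose,
    fromBlocks_multiply, ← fromBlocks_one]

theorem fromBlocks_diag_mem_symplecticGroup_iff {R : Type*} [CommRing R]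
    {a d : Matrix l l R} :
    fromBlocks a 0 0 d ∈ symplecticGroup l R ↔ aᵀ * d = 1 := by
  simp [SymplecticGroup.fromBlocks_mem_iff]

theorem transpose_mul_map_star_of_mem_unitaryGroup {R : Type*} [CommRing R] [StarRing R]
    {A : Matrix l l R} (hA : A ∈ unitaryGroup l R) : Aᵀ * A.map star = 1 := by
  simpa [← conjTranspose_transpose, ← transpose_mul, star_eq_conjTranspose]
    using congrArg transpose (mem_unitaryGroup_iff'.mp hA)

theorem mul_mul_nonsing_inv_eq_iff_semiconjBy {R : Type*} [CommRing R] {g x y : Matrix l l R}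
    (hg : IsUnit g.det) : g * x * g⁻¹ = y ↔ SemiconjBy g x y := by
  constructor
  · rintro rfl
    exact (nonsing_inv_mul_cancel_right _ _ hg).symm
  · intro h
    rw [h.eq, mul_nonsing_inv_cancel_right _ _ hg]

end Matrix

def phase (u : ℂ) : M6 := fromBlocks (u • 1) 0 0 (starRingEnd ℂ u • 1)

theorem phase_mem_U13 {u : ℂ} (hu : ‖u‖ = 1) : phase u ∈ U13 := ⟨u, hu, rfl⟩

theorem phase_mul (u w : ℂ) : phase (u * w) = phase u * phase w := by
  simp [phase, fromBlocks_multiply, smul_smul, mul_comm]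

theorem phase_neg_one : phase (-1) = -1 := by
  simp [phase, ← fromBlocks_one, fromBlocks_neg]

theorem phase_injective : Function.Injective phase := fun u w h => by
  simpa [phase] using congrFun (congrFun h (Sum.inl 0)) (Sum.inl 0)

theorem semiconjBy_J6_phase (u : ℂ) : SemiconjBy J6 (phase u) (phase (starRingEnd ℂ u)) := by
  simp [SemiconjBy, J6, phase, fromBlocks_multiply]

theorem commute_iotaM_phase (A : Matrix (Fin 3) (Fin 3) ℂ) (u : ℂ) :
    Commute (iotaM A) (phase u) :=
  commute_fromBlocks_diag_scalar _ _ _ _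

theorem J6_mul_iotaM_mul_J6_inv (A : Matrix (Fin 3) (Fin 3) ℂ) :
    J6 * iotaM A * J6⁻¹ = iotaM (A.map (starRingEnd ℂ)) := by
  have hJ : J6⁻¹ = fromBlocks 0 (-1) 1 0 := inv_eq_right_inv (by simp [J6, fromBlocks_multiply])
  rw [hJ]
  ext (i | i) (j | j) <;> simp [J6, iotaM, fromBlocks_multiply]

theorem J6_eq_neg_J : J6 = -J (Fin 3) ℂ := by
  simp [J6, J, fromBlocks_neg]

theorem J6_mul_J6 : J6 * J6 = -1 := by
  rw [J6_eq_neg_J, neg_mul_neg, J_squared]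

theorem mem_USp6set_iff {g : M6} :
    g ∈ USp6set ↔ g ∈ unitaryGroup (Fin 3 ⊕ Fin 3) ℂ ∧ g ∈ symplecticGroup (Fin 3) ℂ := by
  rw [SymplecticGroup.mem_iff', USp6set, Set.mem_ofPred_eq, J6_eq_neg_J, Matrix.mul_neg,
    Matrix.neg_mul, neg_inj]

theorem USp6set_mul_mem {g h : M6} (hg : g ∈ USp6set) (hh : h ∈ USp6set) : g * h ∈ USp6set := by
  rw [mem_USp6set_iff] at *
  exact ⟨mul_mem hg.1 hh.1, mul_mem hg.2 hh.2⟩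

theorem J6_mem_USp6set : J6 ∈ USp6set := by
  refine mem_USp6set_iff.mpr ⟨?_, ?_⟩
  · simp [mem_unitaryGroup_iff, star_eq_conjTranspose, J6, fromBlocks_conjTranspose,
      fromBlocks_multiply, ← fromBlocks_one]
  · exact J6_eq_neg_J ▸ SymplecticGroup.neg_mem (SymplecticGroup.J_mem _ _)

theorem USp6set_neg_mem {g : M6} (hg : g ∈ USp6set) : -g ∈ USp6set := by
  rw [mem_USp6set_iff, mem_unitaryGroup_iff, star_neg, neg_mul_neg, ← mem_unitaryGroup_iff] at *
  exact ⟨hg.1, SymplecticGroup.neg_mem hg.2⟩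

theorem isUnit_det_of_mem_USp6set {g : M6} (hg : g ∈ USp6set) : IsUnit g.det :=
  SymplecticGroup.symplectic_det (mem_USp6set_iff.mp hg).2

theorem iotaM_mem_USp6set {A : Matrix (Fin 3) (Fin 3) ℂ} (hA : A ∈ unitaryGroup (Fin 3) ℂ) :
    iotaM A ∈ USp6set := by
  refine mem_USp6set_iff.mpr ⟨?_, ?_⟩
  · exact fromBlocks_diag_mem_unitaryGroup_iff.mpr ⟨hA, map_star_mem_unitaryGroup_iff.mpr hA⟩
  · exact fromBlocks_diag_mem_symplecticGroup_iff.mpr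
      (transpose_mul_map_star_of_mem_unitaryGroup hA)

theorem mem_iotaU3_of_commute_phase_I {g : M6} (hg : g ∈ USp6set)
    (hcomm : Commute g (phase Complex.I)) : g ∈ iotaU3 := by
  rw [← fromBlocks_toBlocks g] at hg hcomm ⊢
  obtain ⟨hb, hc⟩ := offDiag_blocks_eq_zero_of_commute (by norm_num [Complex.ext_iff]) hcomm
  rw [hb, hc, mem_USp6set_iff, fromBlocks_diag_mem_unitaryGroup_iff,
    fromBlocks_diag_mem_symplecticGroup_iff] at hg
  obtain ⟨⟨ha, -⟩, had⟩ := hg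
  refine ⟨g.toBlocks₁₁, ha, ?_⟩
  have hd : g.toBlocks₂₂ = g.toBlocks₁₁.map star :=
    (inv_eq_right_inv had).symm.trans
      (inv_eq_right_inv (transpose_mul_map_star_of_mem_unitaryGroup ha))
  rw [hb, hc, hd]
  rfl

theorem centralizer_U13 : {g ∈ USp6set | ∀ x ∈ U13, g * x = x * g} = iotaU3 := by
  ext g
  constructor
  · rintro ⟨hg, hc⟩
    exact mem_iotaU3_of_commute_phase_I hg (hc _ (phase_mem_U13 Complex.norm_I))
  · rintro ⟨A, hA, rfl⟩
    refine ⟨iotaM_mem_USp6set hA, ?_⟩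
    rintro _ ⟨u, -, rfl⟩
    exact commute_iotaM_phase A u

theorem conj_image_U13_of_semiconjBy {g : M6} (hg : g ∈ USp6set) {σ : ℂ → ℂ}
    (hσ : Function.Involutive σ) (hnorm : ∀ u, ‖σ u‖ = ‖u‖)
    (h : ∀ u, SemiconjBy g (phase u) (phase (σ u))) :
    {y | ∃ x ∈ U13, y = g * x * g⁻¹} = U13 := by
  have hconj (u : ℂ) : g * phase u * g⁻¹ = phase (σ u) :=
    (mul_mul_nonsing_inv_eq_iff_semiconjBy (isUnit_det_of_mem_USp6set hg)).mpr (h u)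
  ext y
  constructor
  · rintro ⟨_, ⟨u, hu, rfl⟩, rfl⟩
    exact ⟨σ u, (hnorm u).trans hu, hconj u⟩
  · rintro ⟨u, hu, rfl⟩
    refine ⟨phase (σ u), phase_mem_U13 ((hnorm u).trans hu), ?_⟩
    rw [hconj, hσ u]
    rfl

theorem semiconjBy_phase_I_of_normalizes {g : M6} (hg : g ∈ USp6set)
    (hN : {y | ∃ x ∈ U13, y = g * x * g⁻¹} = U13) :
    Commute g (phase Complex.I) ∨ SemiconjBy g (phase Complex.I) (phase (-Complex.I)) := by
  have hdet := isUnit_det_of_mem_USp6set hg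
  obtain ⟨v, -, hv⟩ : g * phase Complex.I * g⁻¹ ∈ U13 :=
    hN ▸ ⟨_, phase_mem_U13 Complex.norm_I, rfl⟩
  have hsemi : SemiconjBy g (phase Complex.I) (phase v) :=
    (mul_mul_nonsing_inv_eq_iff_semiconjBy hdet).mp hv
  have hsq : v * v = Complex.I * Complex.I := by
    have h2 := hsemi.mul_right hsemi
    rw [← phase_mul, ← phase_mul, Complex.I_mul_I, phase_neg_one] at h2
    refine phase_injective (((isUnit_iff_isUnit_det g).mpr hdet).mul_right_cancel ?_)
    rw [Complex.I_mul_I, phase_neg_one, ← h2.eq, mul_neg_one, neg_one_mul]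
  rcases mul_self_eq_mul_self_iff.mp hsq with rfl | rfl
  exacts [Or.inl hsemi, Or.inr hsemi]

theorem normalizer_U13 :
    {g ∈ USp6set | {y | ∃ x ∈ U13, y = g * x * g⁻¹} = U13} =
      iotaU3 ∪ (fun M => J6 * M) '' iotaU3 := by
  ext g
  constructor
  · rintro ⟨hg, hN⟩
    rcases semiconjBy_phase_I_of_normalizes hg hN with hc | hac
    · exact Or.inl (mem_iotaU3_of_commute_phase_I hg hc)
    · have hJ : SemiconjBy (-J6) (phase (-Complex.I)) (phase Complex.I) := by
        simpa using (semiconjBy_J6_phase (-Complex.I)).neg_left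
      refine Or.inr ⟨-J6 * g, mem_iotaU3_of_commute_phase_I
        (USp6set_mul_mem (USp6set_neg_mem J6_mem_USp6set) hg) (hJ.mul_left hac), ?_⟩
      show J6 * (-J6 * g) = g
      rw [← mul_assoc, mul_neg, J6_mul_J6, neg_neg, one_mul]
  · rintro (⟨A, hA, rfl⟩ | ⟨_, ⟨A, hA, rfl⟩, rfl⟩)
    · exact ⟨iotaM_mem_USp6set hA, conj_image_U13_of_semiconjBy (iotaM_mem_USp6set hA)
        (σ := id) (fun _ => rfl) (fun _ => rfl) (commute_iotaM_phase A)⟩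
    · have hg := USp6set_mul_mem J6_mem_USp6set (iotaM_mem_USp6set hA)
      exact ⟨hg, conj_image_U13_of_semiconjBy hg Complex.conj_conj Complex.norm_conj
        fun u => (semiconjBy_J6_phase u).mul_left (commute_iotaM_phase A u)⟩

theorem statement15 :
    {g ∈ USp6set | ∀ x ∈ U13, g * x = x * g} = iotaU3 ∧
    {g ∈ USp6set | {y | ∃ x ∈ U13, y = g * x * g⁻¹} = U13} =
      iotaU3 ∪ (fun M => J6 * M) '' iotaU3 ∧
    ∀ A ∈ Matrix.unitaryGroup (Fin 3) ℂ,
      J6 * iotaM A * J6⁻¹ = iotaM (A.map (starRingEnd ℂ)) :=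
  ⟨centralizer_U13, normalizer_U13, fun A _ => J6_mul_iotaM_mul_J6_inv A⟩
end
end
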